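/- Let Π_A be an observable on ℂ^D with Tr(Π_A) > 0, set ρ_A := Π_A / Tr(Π_A) and ⟨Π_A⟩ := Tr(Π_A)/D. Let w₊ be a completely positive weight, W ∈ (0,1), and ΔE_W > 0 with w̃₊(δE) > W for all |δE| < ΔE_W, and suppose |∫_ℝ w₊(t) · Tr(ρ_A(t) Π_A) dt − ⟨Π_A⟩| < ε_A for some ε_A > 0. Then for every weight function w with |w̃(δE)| ≤ w₀ for all |δE| ≥ ΔE_W, where w₀ ≥ 0, one has |∫_ℝ w(t) · Tr(ρ_A(t) Π_A) dt − ⟨Π_A⟩| < w₀ + ε_A / W. -/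

import Mathlib

/-!
In the energy eigenbasis the `w`-averaged autocorrelator is `∑ c (n, m) · w̃ (E n - E m)` with
`c (n, m) = |Π n m|² / Tr Π`, a probability distribution on pairs because `Π² = Π`. Pairs with
equal energies contribute `w̃ 0 = 1` and, by Cauchy–Schwarz on the diagonal, carry mass at least
`⟨Π⟩ = Tr Π / D`. Since `w̃₊ ≥ 0` everywhere and `w̃₊ > W` in the band `|δE| < ΔE_W`, the
hypothesis on `w₊` bounds the band mass in excess of `⟨Π⟩` by `ε_A / W`. For any other weight,
`|w̃| ≤ 1` lets the band pairs deviate from `⟨Π⟩` by at most that excess, and the pairs outside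
the band contribute at most `w₀`.
-/

open MeasureTheory Filter
open scoped ComplexOrder

namespace QET

variable {D : ℕ}

/-- `exp(-itH)` for the Hamiltonian `H = Σ_n (E n) • P_n`, where `P_n` is the orthogonal
projection onto the `n`-th vector of the fixed orthonormal eigenbasis `e`.  All operators are
written as matrices in this eigenbasis, so `H` is diagonal and
`exp(-itH) = diag (exp (-i t E n))`. -/
noncomputable def U (E : Fin D → ℝ) (t : ℝ) : Matrix (Fin D) (Fin D) ℂ :=
  Matrix.diagonal fun n => Complex.exp (-(Complex.I) * t * (E n))

/-- Time evolution `X(t) = exp(-itH) · X · exp(itH)`. -/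
noncomputable def evolve (E : Fin D → ℝ) (t : ℝ) (X : Matrix (Fin D) (Fin D) ℂ) :
    Matrix (Fin D) (Fin D) ℂ :=
  U E t * X * U E (-t)

/-- A state: a positive semidefinite operator with unit trace. -/
def IsState (ρ : Matrix (Fin D) (Fin D) ℂ) : Prop :=
  ρ.PosSemidef ∧ ρ.trace = 1

/-- An observable: an orthogonal projection (Hermitian idempotent). -/
def IsObservable (P : Matrix (Fin D) (Fin D) ℂ) : Prop :=
  P.IsHermitian ∧ P * P = P

/-- Orthogonal projection `Π_S` onto the energy shell spanned by `{e n : n ∈ S}`. -/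
noncomputable def shellProj (S : Finset (Fin D)) : Matrix (Fin D) (Fin D) ℂ :=
  Matrix.diagonal fun n => if n ∈ S then 1 else 0

/-- A state is supported on the shell of `S`: `Π_S ρ Π_S = ρ`. -/
def SupportedOn (S : Finset (Fin D)) (ρ : Matrix (Fin D) (Fin D) ℂ) : Prop :=
  shellProj S * ρ * shellProj S = ρ

/-- Thermal value `⟨P⟩_S = Tr(P Π_S)/d` (a real number: trace of Hermitian products below). -/
noncomputable def thermVal (S : Finset (Fin D)) (P : Matrix (Fin D) (Fin D) ℂ) : ℝ :=
  (P * shellProj S).trace.re / S.card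

/-- Fourier transform `w̃(E) = ∫ w(t) exp(-iEt) dt` of a weight function. -/
noncomputable def fourier (w : ℝ → ℝ) (En : ℝ) : ℂ :=
  ∫ t : ℝ, (w t : ℂ) * Complex.exp (-(Complex.I) * En * t)

/-- A weight function: integrable, nonnegative, normalized to `∫ w = 1`. -/
structure IsWeight (w : ℝ → ℝ) : Prop where
  integrable : Integrable w
  nonneg : ∀ t, 0 ≤ w t
  normalized : (∫ t : ℝ, w t) = 1

/-- A completely positive weight: a weight function whose Fourier transform is a
nonnegative real number everywhere. -/
structure IsCPWeight (w : ℝ → ℝ) extends IsWeight w : Prop where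
  fourier_im : ∀ En : ℝ, (fourier w En).im = 0
  fourier_nonneg : ∀ En : ℝ, 0 ≤ (fourier w En).re

/-- The matrix element `⟨e n, (P - ⟨P⟩_S · 1) e m⟩ = ⟨e n, P e m⟩ - ⟨P⟩_S δ_{nm}`. -/
noncomputable def devEl (S : Finset (Fin D)) (P : Matrix (Fin D) (Fin D) ℂ)
    (n m : Fin D) : ℂ :=
  P n m - if n = m then (thermVal S P : ℂ) else 0

/-- Band variance `Σ_{n,m ∈ S, |E n - E m| < ΔE} |⟨e n, P e m⟩ - ⟨P⟩_S δ_{nm}|²`. -/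
noncomputable def bandVar (S : Finset (Fin D)) (E : Fin D → ℝ) (ΔE : ℝ)
    (P : Matrix (Fin D) (Fin D) ℂ) : ℝ :=
  ∑ n ∈ S, ∑ m ∈ S,
    if |E n - E m| < ΔE then ‖devEl S P n m‖ ^ 2 else 0

/-- Energy-band thermalization in the shell `S` with bandwidth `ΔE` and accuracy `ε`. -/
def EnergyBandTherm (S : Finset (Fin D)) (E : Fin D → ℝ) (ΔE ε : ℝ)
    (P : Matrix (Fin D) (Fin D) ℂ) : Prop :=
  (1 / (S.card : ℝ)) * bandVar S E ΔE P < ε ^ 2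

/-- Expectation value `⟨v, P v⟩` of an operator in a vector. -/
noncomputable def expVal (P : Matrix (Fin D) (Fin D) ℂ) (v : Fin D → ℂ) : ℂ :=
  dotProduct (star v) (P.mulVec v)

lemma norm_exp_neg_I_mul_mul (x t : ℝ) : ‖Complex.exp (-Complex.I * x * t)‖ = 1 := by
  rw [show -Complex.I * x * t = ((-(x * t) : ℝ) : ℂ) * Complex.I by push_cast; ring]
  exact Complex.norm_exp_ofReal_mul_I _

lemma integrable_mul_exp_neg_I_mul {w : ℝ → ℝ} (hw : Integrable w) (x : ℝ) :
    Integrable fun t : ℝ => (w t : ℂ) * Complex.exp (-Complex.I * x * t) :=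
  hw.ofReal.mul_bdd (by fun_prop)
    (Eventually.of_forall fun t => (norm_exp_neg_I_mul_mul x t).le)

lemma IsWeight.fourier_zero {w : ℝ → ℝ} (hw : IsWeight w) : fourier w 0 = 1 := by
  simp only [fourier, Complex.ofReal_zero, mul_zero, zero_mul, Complex.exp_zero, mul_one]
  rw [integral_complex_ofReal, hw.normalized, Complex.ofReal_one]

lemma IsWeight.norm_fourier_le_one {w : ℝ → ℝ} (hw : IsWeight w) (x : ℝ) :
    ‖fourier w x‖ ≤ 1 := by
  calc ‖fourier w x‖ ≤ ∫ t : ℝ, ‖(w t : ℂ) * Complex.exp (-Complex.I * x * t)‖ :=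
        norm_integral_le_integral_norm _
    _ = ∫ t : ℝ, w t := by
        congr 1; funext t
        rw [norm_mul, norm_exp_neg_I_mul_mul, mul_one, Complex.norm_real,
          Real.norm_of_nonneg (hw.nonneg t)]
    _ = 1 := hw.normalized

lemma trace_evolve_mul (E : Fin D → ℝ) (t : ℝ) (X P : Matrix (Fin D) (Fin D) ℂ) :
    (evolve E t X * P).trace
      = ∑ n, ∑ m, X n m * P m n * Complex.exp (-Complex.I * (E n - E m : ℝ) * t) := by
  simp only [evolve, U, Matrix.trace, Matrix.diag, Matrix.mul_apply, Matrix.diagonal_apply,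
    ite_mul, mul_ite, zero_mul, mul_zero, Finset.sum_ite_eq, Finset.sum_ite_eq',
    Finset.mem_univ, if_true]
  refine Finset.sum_congr rfl fun n _ => Finset.sum_congr rfl fun m _ => ?_
  rw [show -Complex.I * (E n - E m : ℝ) * t
      = -Complex.I * t * E n + -Complex.I * ((-t : ℝ) : ℂ) * E m by push_cast; ring,
    Complex.exp_add]
  ring

lemma integral_weight_mul_trace_evolve_mul (E : Fin D → ℝ) {w : ℝ → ℝ} (hw : Integrable w)
    (X P : Matrix (Fin D) (Fin D) ℂ) :
    ∫ t : ℝ, (w t : ℂ) * (evolve E t X * P).trace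
      = ∑ n, ∑ m, X n m * P m n * fourier w (E n - E m) := by
  have hint : ∀ n m : Fin D, Integrable fun t : ℝ =>
      X n m * P m n * ((w t : ℂ) * Complex.exp (-Complex.I * (E n - E m : ℝ) * t)) :=
    fun n m => (integrable_mul_exp_neg_I_mul hw _).const_mul _
  have hpt : (fun t : ℝ => (w t : ℂ) * (evolve E t X * P).trace) = fun t =>
      ∑ n, ∑ m, X n m * P m n * ((w t : ℂ) * Complex.exp (-Complex.I * (E n - E m : ℝ) * t)) := by
    funext t
    simp only [trace_evolve_mul, Finset.mul_sum]
    exact Finset.sum_congr rfl fun n _ => Finset.sum_congr rfl fun m _ => by ring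
  rw [hpt, integral_finsetSum _ fun n _ => integrable_finsetSum _ fun m _ => hint n m]
  refine Finset.sum_congr rfl fun n _ => ?_
  rw [integral_finsetSum _ fun m _ => hint n m]
  exact Finset.sum_congr rfl fun m _ => integral_const_mul _ _

noncomputable def autocorrWeight (P : Matrix (Fin D) (Fin D) ℂ) (p : Fin D × Fin D) : ℝ :=
  ‖P p.1 p.2‖ ^ 2 / P.trace.re

lemma autocorrWeight_nonneg {P : Matrix (Fin D) (Fin D) ℂ} (htr : 0 ≤ P.trace.re)
    (p : Fin D × Fin D) : 0 ≤ autocorrWeight P p :=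
  div_nonneg (sq_nonneg _) htr

lemma integral_autocorrelator_eq (E : Fin D → ℝ) {P : Matrix (Fin D) (Fin D) ℂ}
    (hP : P.IsHermitian) {w : ℝ → ℝ} (hw : Integrable w) :
    ∫ t : ℝ, (w t : ℂ) * (evolve E t ((P.trace.re : ℂ)⁻¹ • P) * P).trace
      = ∑ p : Fin D × Fin D, (autocorrWeight P p : ℂ) * fourier w (E p.1 - E p.2) := by
  rw [integral_weight_mul_trace_evolve_mul E hw, Fintype.sum_prod_type]
  refine Finset.sum_congr rfl fun n _ => Finset.sum_congr rfl fun m _ => ?_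
  rw [Matrix.smul_apply, smul_eq_mul, autocorrWeight]
  dsimp only
  rw [← hP.apply n m, norm_star, Complex.star_def, mul_assoc _ _ (P m n), Complex.conj_mul']
  push_cast
  ring

lemma IsObservable.sum_norm_sq_eq_trace_re {P : Matrix (Fin D) (Fin D) ℂ}
    (hP : IsObservable P) : ∑ p : Fin D × Fin D, ‖P p.1 p.2‖ ^ 2 = P.trace.re := by
  conv_rhs => rw [← hP.2]
  simp only [Matrix.trace, Matrix.diag, Matrix.mul_apply, Complex.re_sum,
    Fintype.sum_prod_type]
  refine Finset.sum_congr rfl fun n _ => Finset.sum_congr rfl fun m _ => ?_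
  rw [← hP.1.apply m n, Complex.star_def, Complex.mul_conj', ← Complex.ofReal_pow,
    Complex.ofReal_re]

lemma IsObservable.sum_autocorrWeight {P : Matrix (Fin D) (Fin D) ℂ} (hP : IsObservable P)
    (htr : P.trace.re ≠ 0) : ∑ p, autocorrWeight P p = 1 := by
  simp only [autocorrWeight]
  rw [← Finset.sum_div, hP.sum_norm_sq_eq_trace_re, div_self htr]

lemma sq_trace_re_le_card_mul_sum_norm_sq_diag (P : Matrix (Fin D) (Fin D) ℂ) :
    P.trace.re ^ 2 ≤ D * ∑ n, ‖P n n‖ ^ 2 := by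
  calc P.trace.re ^ 2 = (∑ n, (P n n).re) ^ 2 := by
        simp only [Matrix.trace, Matrix.diag, Complex.re_sum]
    _ ≤ D * ∑ n, (P n n).re ^ 2 := by
        simpa using sq_sum_le_card_mul_sum_sq (s := Finset.univ) (f := fun n => (P n n).re)
    _ ≤ D * ∑ n, ‖P n n‖ ^ 2 := by
        refine mul_le_mul_of_nonneg_left (Finset.sum_le_sum fun n _ => ?_) (Nat.cast_nonneg D)
        exact sq_le_sq.mpr ((Complex.abs_re_le_norm _).trans (le_abs_self _))

lemma trace_re_div_card_le_sum_autocorrWeight (E : Fin D → ℝ) {P : Matrix (Fin D) (Fin D) ℂ}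
    (htr : 0 < P.trace.re) :
    P.trace.re / D ≤ ∑ p with E p.1 - E p.2 = 0, autocorrWeight P p := by
  have hdiag : P.trace.re / D ≤ ∑ n, autocorrWeight P (n, n) := by
    rcases Nat.eq_zero_or_pos D with rfl | hD
    · simp
    simp only [autocorrWeight]
    rw [← Finset.sum_div, div_le_div_iff₀ (by exact_mod_cast hD) htr]
    nlinarith [sq_trace_re_le_card_mul_sum_norm_sq_diag P]
  refine hdiag.trans ?_
  rw [← Finset.sum_image fun n _ m _ h => (Prod.ext_iff.mp h).1]
  refine Finset.sum_le_sum_of_subset_of_nonneg ?_ fun p _ _ => autocorrWeight_nonneg htr.le p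
  intro p hp
  obtain ⟨n, -, rfl⟩ := Finset.mem_image.mp hp
  simp

section SpectralSum

variable {ι : Type*} [Fintype ι] {c g : ι → ℝ} {μ ΔE : ℝ}

lemma mul_sub_le_re_sum_fourier {wp : ℝ → ℝ} (hwp : IsCPWeight wp) {W : ℝ} (hW1 : W ≤ 1)
    (hΔE : 0 < ΔE) (hband : ∀ δE : ℝ, |δE| < ΔE → W < (fourier wp δE).re)
    (hc : ∀ i, 0 ≤ c i) (hμ : μ ≤ ∑ i with g i = 0, c i) :
    W * (∑ i with |g i| < ΔE, c i - μ) ≤ (∑ i, (c i : ℂ) * fourier wp (g i)).re - μ := by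
  have hpt : ∀ i, W * (if |g i| < ΔE then c i else 0) + (1 - W) * (if g i = 0 then c i else 0)
      ≤ c i * (fourier wp (g i)).re := by
    intro i
    by_cases h0 : g i = 0
    · simp only [h0, abs_zero, hΔE, if_true, hwp.fourier_zero, Complex.one_re]
      linarith
    by_cases hb : |g i| < ΔE
    · simpa [h0, hb, mul_comm] using mul_le_mul_of_nonneg_left (hband _ hb).le (hc i)
    · simpa [h0, hb] using mul_nonneg (hc i) (hwp.fourier_nonneg (g i))
  have hsum := Finset.sum_le_sum fun i (_ : i ∈ Finset.univ) => hpt i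
  rw [Finset.sum_add_distrib, ← Finset.mul_sum, ← Finset.mul_sum, ← Finset.sum_filter,
    ← Finset.sum_filter] at hsum
  simp only [Complex.re_sum, Complex.re_ofReal_mul]
  nlinarith [mul_le_mul_of_nonneg_left hμ (sub_nonneg.mpr hW1)]

lemma norm_sum_fourier_sub_le {w : ℝ → ℝ} (hw : IsWeight w) (hΔE : 0 < ΔE) {w₀ : ℝ}
    (hw₀ : 0 ≤ w₀) (hfar : ∀ δE : ℝ, ΔE ≤ |δE| → ‖fourier w δE‖ ≤ w₀)
    (hc : ∀ i, 0 ≤ c i) (hc1 : ∑ i, c i = 1) (hμ : μ ≤ ∑ i with g i = 0, c i) :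
    ‖∑ i, (c i : ℂ) * fourier w (g i) - μ‖ ≤ ∑ i with |g i| < ΔE, c i - μ + w₀ := by
  have hpt : ∀ i, ‖(c i : ℂ) * fourier w (g i) - ((if g i = 0 then c i else 0 : ℝ) : ℂ)‖
      ≤ (if |g i| < ΔE then c i else 0) - (if g i = 0 then c i else 0) + c i * w₀ := by
    intro i
    have hci := hc i
    by_cases h0 : g i = 0
    · simp only [h0, hw.fourier_zero, abs_zero, hΔE, if_true, mul_one, sub_self, norm_zero,
        zero_add]
      positivity
    have hnorm : ‖(c i : ℂ) * fourier w (g i)‖ = c i * ‖fourier w (g i)‖ := by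
      rw [norm_mul, Complex.norm_real, Real.norm_of_nonneg hci]
    simp only [h0, if_false, Complex.ofReal_zero, sub_zero, hnorm]
    by_cases hb : |g i| < ΔE
    · simp only [hb, if_true]
      nlinarith [hw.norm_fourier_le_one (g i), mul_nonneg hci hw₀]
    · simp only [hb, if_false]
      nlinarith [hfar (g i) (not_lt.mp hb)]
  have hsplit : ∑ i, (c i : ℂ) * fourier w (g i) - μ
      = ∑ i, ((c i : ℂ) * fourier w (g i) - ((if g i = 0 then c i else 0 : ℝ) : ℂ))
        + (((∑ i with g i = 0, c i) - μ : ℝ) : ℂ) := by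
    rw [Finset.sum_sub_distrib, Finset.sum_filter]
    push_cast
    ring
  calc ‖∑ i, (c i : ℂ) * fourier w (g i) - μ‖
      ≤ ∑ i, ‖(c i : ℂ) * fourier w (g i) - ((if g i = 0 then c i else 0 : ℝ) : ℂ)‖
          + ((∑ i with g i = 0, c i) - μ) := by
        rw [hsplit]
        refine (norm_add_le _ _).trans (add_le_add (norm_sum_le _ _) ?_)
        rw [Complex.norm_real, Real.norm_of_nonneg (sub_nonneg.mpr hμ)]
    _ ≤ ∑ i, ((if |g i| < ΔE then c i else 0) - (if g i = 0 then c i else 0) + c i * w₀)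
          + ((∑ i with g i = 0, c i) - μ) :=
        add_le_add_left (Finset.sum_le_sum fun i _ => hpt i) _
    _ = ∑ i with |g i| < ΔE, c i - μ + w₀ := by
        rw [Finset.sum_add_distrib, Finset.sum_sub_distrib, ← Finset.sum_mul, hc1,
          Finset.sum_filter, Finset.sum_filter]
        ring

theorem norm_sum_fourier_sub_lt_of_isCPWeight {wp : ℝ → ℝ} (hwp : IsCPWeight wp) {W : ℝ}
    (hW0 : 0 < W) (hW1 : W ≤ 1) (hΔE : 0 < ΔE)
    (hband : ∀ δE : ℝ, |δE| < ΔE → W < (fourier wp δE).re)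
    (hc : ∀ i, 0 ≤ c i) (hc1 : ∑ i, c i = 1) (hμ : μ ≤ ∑ i with g i = 0, c i) {ε : ℝ}
    (hauto : ‖∑ i, (c i : ℂ) * fourier wp (g i) - μ‖ < ε)
    {w : ℝ → ℝ} (hw : IsWeight w) {w₀ : ℝ} (hw₀ : 0 ≤ w₀)
    (hfar : ∀ δE : ℝ, ΔE ≤ |δE| → ‖fourier w δE‖ ≤ w₀) :
    ‖∑ i, (c i : ℂ) * fourier w (g i) - μ‖ < w₀ + ε / W := by
  have hlower := mul_sub_le_re_sum_fourier hwp hW1 hΔE hband hc hμ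
  have hre := (Complex.re_le_norm _).trans_lt hauto
  rw [Complex.sub_re, Complex.ofReal_re] at hre
  have hband_mass : ∑ i with |g i| < ΔE, c i - μ < ε / W := by
    rw [lt_div_iff₀ hW0]
    linarith
  linarith [norm_sum_fourier_sub_le hw hΔE hw₀ hfar hc hc1 hμ]

end SpectralSum

theorem autocorrelator_thermalization_feeds_forward_general
    {D : ℕ} (E : Fin D → ℝ)
    (PiA : Matrix (Fin D) (Fin D) ℂ) (hPiA : IsObservable PiA)
    (htr : 0 < PiA.trace.re)
    (wp : ℝ → ℝ) (hwp : IsCPWeight wp)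
    (W ΔEW : ℝ) (hW0 : 0 < W) (hW1 : W < 1) (hΔEW : 0 < ΔEW)
    (hWband : ∀ δE : ℝ, |δE| < ΔEW → W < (fourier wp δE).re)
    (εA : ℝ)
    (hauto : ‖
        ((∫ t : ℝ, (wp t : ℂ) *
            (evolve E t ((PiA.trace.re : ℂ)⁻¹ • PiA) * PiA).trace) -
          ((PiA.trace.re / D : ℝ) : ℂ))‖ < εA) :
    ∀ w : ℝ → ℝ, IsWeight w → ∀ w₀ : ℝ, 0 ≤ w₀ →
      (∀ δE : ℝ, ΔEW ≤ |δE| → ‖fourier w δE‖ ≤ w₀) →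
      ‖
          ((∫ t : ℝ, (w t : ℂ) *
              (evolve E t ((PiA.trace.re : ℂ)⁻¹ • PiA) * PiA).trace) -
            ((PiA.trace.re / D : ℝ) : ℂ))‖
        < w₀ + εA / W := by
  intro w hw w₀ hw₀ hfar
  rw [integral_autocorrelator_eq E hPiA.1 hw.integrable]
  rw [integral_autocorrelator_eq E hPiA.1 hwp.integrable] at hauto
  exact norm_sum_fourier_sub_lt_of_isCPWeight hwp hW0 hW1.le hΔEW hWband
    (autocorrWeight_nonneg htr.le) (hPiA.sum_autocorrWeight htr.ne')
    (trace_re_div_card_le_sum_autocorrWeight E htr) hauto hw hw₀ hfar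

/-- **Autocorrelator thermalization o.a. feeds forward to longer timescales.**
With `ρ_A := Π_A / Tr Π_A` and `⟨Π_A⟩ := Tr Π_A / D`, suppose the `w₊`-averaged
autocorrelator is within `ε_A` of `⟨Π_A⟩`, where `w₊` is a completely positive weight with
`w̃₊(δE) > W` for `|δE| < ΔE_W` (`W ∈ (0,1)`, `ΔE_W > 0`).  Then for every weight function
`w` with `|w̃(δE)| ≤ w₀` for all `|δE| ≥ ΔE_W`,
`|∫ w(t) Tr(ρ_A(t) Π_A) dt - ⟨Π_A⟩| < w₀ + ε_A / W`. -/
theorem autocorrelator_thermalization_feeds_forward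
    {D : ℕ} (hD : 0 < D) (E : Fin D → ℝ)
    (PiA : Matrix (Fin D) (Fin D) ℂ) (hPiA : IsObservable PiA)
    (htr : 0 < PiA.trace.re)
    (wp : ℝ → ℝ) (hwp : IsCPWeight wp)
    (W ΔEW : ℝ) (hW0 : 0 < W) (hW1 : W < 1) (hΔEW : 0 < ΔEW)
    (hWband : ∀ δE : ℝ, |δE| < ΔEW → W < (fourier wp δE).re)
    (εA : ℝ) (hεA : 0 < εA)
    (hauto : ‖
        ((∫ t : ℝ, (wp t : ℂ) *
            (evolve E t ((PiA.trace.re : ℂ)⁻¹ • PiA) * PiA).trace) -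
          ((PiA.trace.re / D : ℝ) : ℂ))‖ < εA) :
    ∀ w : ℝ → ℝ, IsWeight w → ∀ w₀ : ℝ, 0 ≤ w₀ →
      (∀ δE : ℝ, ΔEW ≤ |δE| → ‖fourier w δE‖ ≤ w₀) →
      ‖
          ((∫ t : ℝ, (w t : ℂ) *
              (evolve E t ((PiA.trace.re : ℂ)⁻¹ • PiA) * PiA).trace) -
            ((PiA.trace.re / D : ℝ) : ℂ))‖
        < w₀ + εA / W :=
  autocorrelator_thermalization_feeds_forward_general E PiA hPiA htr wp hwp W ΔEW hW0 hW1 hΔEW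
    hWband εA hauto

end QET
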